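/- arXiv:1312.7039 — 3 statements merged into one kernel-verified Lean document; each statement's English description precedes it below -/
import Mathlib

section
/- In the noise-free setting, let A ⊆ A† with B = A†∖A, suppose Ψ satisfies RIP of order T+1 with constant δ < 1, let d ∈ ℝ^p have |d_i| = λ for all i ∈ A, let x_A = (Ψ_AᵗΨ_A)⁻¹(Ψ_Aᵗ y − d_A), and define d_i = Ψ_iᵗ(y − Ψ_A x_A) for i ∉ A. Then for every i ∉ A† one has |d_i| ≤ (δ/(1−δ))(‖x†_B‖₂ + ‖d_A‖₂). -/
open Matrix

/-- The submatrix `Ψ_A` of `Ψ` consisting of the columns indexed by `A`. -/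
def colSub {n p : ℕ} (Ψ : Matrix (Fin n) (Fin p) ℝ) (A : Finset (Fin p)) :
    Matrix (Fin n) {i // i ∈ A} ℝ :=
  Matrix.of fun i j => Ψ i j.1

/-- `Ψ` satisfies the restricted isometry property of order `k` with constant `δ`:
`(1 − δ)‖x‖₂² ≤ ‖Ψx‖₂² ≤ (1 + δ)‖x‖₂²` for all `x` with at most `k` nonzero entries. -/
def HasRIP {n p : ℕ} (Ψ : Matrix (Fin n) (Fin p) ℝ) (k : ℕ) (δ : ℝ) : Prop :=
  ∀ x : Fin p → ℝ, (Finset.univ.filter (fun i => x i ≠ 0)).card ≤ k →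
    (1 - δ) * (∑ i, x i ^ 2) ≤ ∑ j, (Ψ *ᵥ x) j ^ 2 ∧
      ∑ j, (Ψ *ᵥ x) j ^ 2 ≤ (1 + δ) * (∑ i, x i ^ 2)

/-!
Let `v = x† − x_A` (with `x_A` extended by zero), so that the residual is `Ψ v`, and split
`v = a + b` with `a` supported on `A` and `b = x†_B`. The normal equations say `Ψ_Aᵀ Ψ v = d_A`,
hence `(1 − δ)‖a‖² ≤ ‖Ψ a‖² = ⟨a, d_A⟩ − ⟨Ψ a, Ψ b⟩ ≤ ‖a‖ ‖d_A‖ + δ ‖a‖ ‖b‖`, where RIP bounds the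
cross term of vectors with disjoint supports by polarization. For `i ∉ A†` the same cross-term
bound gives `|d_i| = |⟨Ψ eᵢ, Ψ v⟩| ≤ δ (‖a‖ + ‖b‖)`, and eliminating `‖a‖` gives the claim.
-/

open Finset

section SumSq

variable {ι : Type*} [Fintype ι]

lemma sqrt_sum_sq_add_le (a b : ι → ℝ) :
    √(∑ i, (a i + b i) ^ 2) ≤ √(∑ i, a i ^ 2) + √(∑ i, b i ^ 2) := by
  simpa [EuclideanSpace.norm_eq] using
    norm_add_le (WithLp.toLp 2 a : EuclideanSpace ℝ ι) (WithLp.toLp 2 b)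

lemma eq_zero_of_sum_sq_nonpos {a : ι → ℝ} (ha : ∑ i, a i ^ 2 ≤ 0) : a = 0 := by
  have h := (Fintype.sum_eq_zero_iff_of_nonneg fun i => sq_nonneg (a i)).1
    (ha.antisymm (by positivity))
  funext i
  exact pow_eq_zero_iff two_ne_zero |>.1 (congrFun h i)

lemma card_filter_ne_zero_le {x : ι → ℝ} {S : Finset ι} (hx : ∀ i ∉ S, x i = 0) :
    #{i | x i ≠ 0} ≤ #S :=
  card_le_card fun i hi => by_contra fun hiS => (mem_filter.1 hi).2 (hx i hiS)

end SumSq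

lemma Matrix.transpose_mulVec_sub_mulVec_nonsing_inv_mulVec {m ι R : Type*} [Fintype m]
    [Fintype ι] [DecidableEq ι] [CommRing R] (M : Matrix m ι R) (hM : IsUnit (Mᵀ * M).det)
    (y : m → R) (c : ι → R) :
    Mᵀ *ᵥ (y - M *ᵥ ((Mᵀ * M)⁻¹ *ᵥ (Mᵀ *ᵥ y - c))) = c := by
  rw [mulVec_sub, mulVec_mulVec, mulVec_mulVec, mul_nonsing_inv _ hM,
    one_mulVec, sub_sub_cancel]

section ExtendByZero

variable {n p : ℕ}

lemma extend_val_eq_zero {A : Finset (Fin p)} (w : A → ℝ) {i : Fin p} (hi : i ∉ A) :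
    Function.extend Subtype.val w 0 i = 0 :=
  Function.extend_apply' _ _ _ fun ⟨j, hj⟩ => hi (hj ▸ j.2)

lemma sum_apply_extend_val {A : Finset (Fin p)} (w : A → ℝ) (g : Fin p → ℝ → ℝ)
    (hg : ∀ i, g i 0 = 0) :
    ∑ i, g i (Function.extend Subtype.val w 0 i) = ∑ i : A, g i (w i) := by
  rw [← sum_subset (subset_univ A) fun i _ hi => by rw [extend_val_eq_zero w hi, hg],
    ← sum_coe_sort]
  exact sum_congr rfl fun i _ => by rw [Subtype.val_injective.extend_apply]

lemma sum_sq_extend_val {A : Finset (Fin p)} (w : A → ℝ) :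
    ∑ i, Function.extend Subtype.val w 0 i ^ 2 = ∑ i, w i ^ 2 :=
  sum_apply_extend_val w (fun _ t => t ^ 2) fun _ => zero_pow two_ne_zero

lemma mulVec_extend_val (Ψ : Matrix (Fin n) (Fin p) ℝ) {A : Finset (Fin p)} (w : A → ℝ) :
    Ψ *ᵥ Function.extend Subtype.val w 0 = colSub Ψ A *ᵥ w :=
  funext fun j => sum_apply_extend_val w (fun i t => Ψ j i * t) fun _ => mul_zero _

lemma colSub_transpose_mulVec_apply (Ψ : Matrix (Fin n) (Fin p) ℝ) {A : Finset (Fin p)}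
    (r : Fin n → ℝ) (j : A) : ((colSub Ψ A)ᵀ *ᵥ r) j = (Ψᵀ *ᵥ r) j :=
  rfl

end ExtendByZero

namespace HasRIP

variable {n p k : ℕ} {Ψ : Matrix (Fin n) (Fin p) ℝ} {δ : ℝ}

theorem one_sub_mul_sum_sq_le (h : HasRIP Ψ k δ) {S : Finset (Fin p)} (hS : #S ≤ k)
    {x : Fin p → ℝ} (hx : ∀ i ∉ S, x i = 0) :
    (1 - δ) * ∑ i, x i ^ 2 ≤ ∑ j, (Ψ *ᵥ x) j ^ 2 :=
  (h x ((card_filter_ne_zero_le hx).trans hS)).1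

theorem sum_sq_le_one_add_mul (h : HasRIP Ψ k δ) {S : Finset (Fin p)} (hS : #S ≤ k)
    {x : Fin p → ℝ} (hx : ∀ i ∉ S, x i = 0) :
    ∑ j, (Ψ *ᵥ x) j ^ 2 ≤ (1 + δ) * ∑ i, x i ^ 2 :=
  (h x ((card_filter_ne_zero_le hx).trans hS)).2

section Disjoint

variable {S U : Finset (Fin p)} {a b : Fin p → ℝ}

theorem dotProduct_mulVec_le (h : HasRIP Ψ k δ) (hSU : Disjoint S U) (hk : #S + #U ≤ k)
    (ha : ∀ i ∉ S, a i = 0) (hb : ∀ i ∉ U, b i = 0) :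
    (Ψ *ᵥ a) ⬝ᵥ (Ψ *ᵥ b) ≤ δ / 2 * (∑ i, a i ^ 2 + ∑ i, b i ^ 2) := by
  have hSUk : #(S ∪ U) ≤ k := (card_union_le S U).trans hk
  have hab : ∀ i, a i * b i = 0 := fun i => by
    by_cases hi : i ∈ S
    · rw [hb i (disjoint_left.1 hSU hi), mul_zero]
    · rw [ha i hi, zero_mul]
  have hsupp : ∀ c : ℝ, ∀ i ∉ S ∪ U, (a + c • b) i = 0 := fun c i hi => by
    rw [mem_union, not_or] at hi
    simp [ha i hi.1, hb i hi.2]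
  have hsum : ∀ c : ℝ, c ^ 2 = 1 → ∑ i, (a + c • b) i ^ 2 = ∑ i, a i ^ 2 + ∑ i, b i ^ 2 :=
    fun c hc => by
      rw [← sum_add_distrib]
      refine sum_congr rfl fun i _ => ?_
      simp only [Pi.add_apply, Pi.smul_apply, smul_eq_mul]
      linear_combination 2 * c * hab i + b i ^ 2 * hc
  have hplus := h.sum_sq_le_one_add_mul hSUk (hsupp 1)
  have hminus := h.one_sub_mul_sum_sq_le hSUk (hsupp (-1))
  rw [hsum 1 (one_pow 2)] at hplus
  rw [hsum (-1) (by norm_num)] at hminus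
  have hpolar : ∑ j, (Ψ *ᵥ (a + (1 : ℝ) • b)) j ^ 2 - ∑ j, (Ψ *ᵥ (a + (-1 : ℝ) • b)) j ^ 2
      = 4 * (Ψ *ᵥ a) ⬝ᵥ (Ψ *ᵥ b) := by
    simp only [mulVec_add, mulVec_smul, dotProduct, mul_sum, ← sum_sub_distrib]
    refine sum_congr rfl fun j _ => ?_
    simp only [Pi.add_apply, Pi.smul_apply, smul_eq_mul]
    ring
  linarith

theorem abs_dotProduct_mulVec_le (h : HasRIP Ψ k δ) (hSU : Disjoint S U) (hk : #S + #U ≤ k)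
    (ha : ∀ i ∉ S, a i = 0) (hb : ∀ i ∉ U, b i = 0) :
    |(Ψ *ᵥ a) ⬝ᵥ (Ψ *ᵥ b)| ≤ δ * √(∑ i, a i ^ 2) * √(∑ i, b i ^ 2) := by
  set α := √(∑ i, a i ^ 2)
  set β := √(∑ i, b i ^ 2)
  have hα : α ^ 2 = ∑ i, a i ^ 2 := Real.sq_sqrt (by positivity)
  have hβ : β ^ 2 = ∑ i, b i ^ 2 := Real.sq_sqrt (by positivity)
  rcases (mul_nonneg (Real.sqrt_nonneg _) (Real.sqrt_nonneg _) : 0 ≤ α * β).eq_or_lt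
    with hαβ | hαβ
  · rcases mul_eq_zero.1 hαβ.symm with h0 | h0 <;>
      simp [eq_zero_of_sum_sq_nonpos (Real.sqrt_eq_zero'.1 h0), α, β]
  -- Rescaling `a` by `‖b‖` and `b` by `±‖a‖` balances the polarization bound.
  have hscaled : ∀ s : ℝ, s ^ 2 = 1 →
      α * β * (s * (Ψ *ᵥ a) ⬝ᵥ (Ψ *ᵥ b)) ≤ δ * (α * β) * (α * β) := fun s hs => by
    have := h.dotProduct_mulVec_le (a := β • a) (b := (s * α) • b) hSU hk
      (fun i hi => by simp [ha i hi]) (fun i hi => by simp [hb i hi])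
    simp only [mulVec_smul, smul_dotProduct, dotProduct_smul, smul_eq_mul, Pi.smul_apply,
      mul_pow, ← mul_sum, ← hα, ← hβ, hs] at this
    linear_combination this
  rw [abs_le]
  constructor <;> nlinarith [hscaled 1 (one_pow 2), hscaled (-1) (by norm_num)]

theorem one_sub_mul_sqrt_sum_sq_le_of_transpose_mulVec_eq (h : HasRIP Ψ k δ) (hδ : 0 ≤ δ)
    (hSU : Disjoint S U) (hk : #S + #U ≤ k) (ha : ∀ i ∉ S, a i = 0) (hb : ∀ i ∉ U, b i = 0)
    {d : Fin p → ℝ} (hd : ∀ j ∈ S, (Ψᵀ *ᵥ (Ψ *ᵥ (a + b))) j = d j) :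
    (1 - δ) * √(∑ i, a i ^ 2) ≤ √(∑ j ∈ S, d j ^ 2) + δ * √(∑ i, b i ^ 2) := by
  set α := √(∑ i, a i ^ 2)
  have hα : α ^ 2 = ∑ i, a i ^ 2 := Real.sq_sqrt (by positivity)
  have hlower := h.one_sub_mul_sum_sq_le ((Nat.le_add_right _ _).trans hk) ha
  have hsplit : ∑ j, (Ψ *ᵥ a) j ^ 2 = a ⬝ᵥ (Ψᵀ *ᵥ (Ψ *ᵥ (a + b))) - (Ψ *ᵥ a) ⬝ᵥ (Ψ *ᵥ b) := by
    rw [dotProduct_mulVec, vecMul_transpose, mulVec_add, dotProduct_add, add_sub_cancel_right]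
    simp only [dotProduct, sq]
  have hfit : a ⬝ᵥ (Ψᵀ *ᵥ (Ψ *ᵥ (a + b))) ≤ α * √(∑ j ∈ S, d j ^ 2) := by
    calc a ⬝ᵥ (Ψᵀ *ᵥ (Ψ *ᵥ (a + b))) = ∑ j ∈ S, a j * d j := by
          rw [dotProduct, ← sum_subset (subset_univ S) fun j _ hj => by rw [ha j hj, zero_mul]]
          exact sum_congr rfl fun j hj => by rw [hd j hj]
      _ ≤ √(∑ j ∈ S, a j ^ 2) * √(∑ j ∈ S, d j ^ 2) := Real.sum_mul_le_sqrt_mul_sqrt _ _ _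
      _ = α * √(∑ j ∈ S, d j ^ 2) := by
          rw [sum_subset (subset_univ S) fun j _ hj => by rw [ha j hj, zero_pow two_ne_zero]]
  have hcross_neg := neg_abs_le ((Ψ *ᵥ a) ⬝ᵥ (Ψ *ᵥ b))
  have hcross := h.abs_dotProduct_mulVec_le hSU hk ha hb
  rcases (Real.sqrt_nonneg (∑ i, a i ^ 2)).eq_or_lt with hα0 | hαpos
  · rw [show α = 0 from hα0.symm, mul_zero]
    positivity
  refine le_of_mul_le_mul_right ?_ hαpos
  nlinarith

end Disjoint

theorem abs_transpose_mulVec_mulVec_le (h : HasRIP Ψ k δ) {V : Finset (Fin p)} (hk : #V + 1 ≤ k)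
    {v : Fin p → ℝ} (hv : ∀ i ∉ V, v i = 0) {i : Fin p} (hi : i ∉ V) :
    |(Ψᵀ *ᵥ (Ψ *ᵥ v)) i| ≤ δ * √(∑ j, v j ^ 2) := by
  have hsingle : ∀ j ∉ ({i} : Finset (Fin p)), (Pi.single i 1 : Fin p → ℝ) j = 0 :=
    fun j hj => Pi.single_eq_of_ne (mem_singleton.not.1 hj) 1
  have := h.abs_dotProduct_mulVec_le (disjoint_singleton_left.2 hi)
    (by rwa [card_singleton, add_comm]) hsingle hv
  have hcol : (Ψᵀ *ᵥ (Ψ *ᵥ v)) i = (Ψ *ᵥ Pi.single i 1) ⬝ᵥ (Ψ *ᵥ v) := by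
    rw [mulVec_single_one]; rfl
  have hone : ∑ j, (Pi.single i 1 : Fin p → ℝ) j ^ 2 = 1 := by simp [Pi.single_apply]
  rwa [hone, Real.sqrt_one, mul_one, ← hcol] at this

theorem injective_mulVec_colSub (h : HasRIP Ψ k δ) (hδ : δ < 1) {A : Finset (Fin p)}
    (hA : #A ≤ k) : Function.Injective (colSub Ψ A).mulVec := by
  intro w w' hww'
  rw [← sub_eq_zero, ← mulVec_sub, ← mulVec_extend_val] at hww'
  have := h.one_sub_mul_sum_sq_le hA fun i hi => extend_val_eq_zero (w - w') hi
  simp only [hww', sum_sq_extend_val, Pi.zero_apply, zero_pow two_ne_zero, sum_const_zero]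
    at this
  exact sub_eq_zero.1 (eq_zero_of_sum_sq_nonpos (nonpos_of_mul_nonpos_right this (sub_pos.2 hδ)))

theorem isUnit_det_transpose_colSub_mul_colSub (h : HasRIP Ψ k δ) (hδ : δ < 1)
    {A : Finset (Fin p)} (hA : #A ≤ k) :
    IsUnit ((colSub Ψ A)ᵀ * colSub Ψ A).det := by
  rw [← isUnit_iff_isUnit_det, ← conjTranspose_eq_transpose_of_trivial]
  exact (PosDef.conjTranspose_mul_self _ (h.injective_mulVec_colSub hδ hA)).isUnit

end HasRIP

theorem stmt_9_general {n p : ℕ} (Ψ : Matrix (Fin n) (Fin p) ℝ)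
    (xdag : Fin p → ℝ) (Adag : Finset (Fin p))
    (hAdag : Adag = Finset.univ.filter (fun i => xdag i ≠ 0))
    (T : ℕ) (hT : T = Adag.card)
    (y : Fin n → ℝ) (hy : y = Ψ *ᵥ xdag)
    (δ : ℝ) (hδ0 : 0 < δ) (hδ1 : δ < 1)
    (hRIP : HasRIP Ψ (T + 1) δ)
    (A : Finset (Fin p)) (hA : A ⊆ Adag)
    (B : Finset (Fin p)) (hB : B = Adag \ A)
    (d : Fin p → ℝ)
    (xA : {i // i ∈ A} → ℝ)
    (hxA : xA = ((colSub Ψ A)ᵀ * colSub Ψ A)⁻¹ *ᵥ ((colSub Ψ A)ᵀ *ᵥ y - fun j => d j.1))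
    (hdI : ∀ i ∉ A, d i = (Ψᵀ *ᵥ (y - colSub Ψ A *ᵥ xA)) i)
 :
    ∀ i ∉ Adag, |d i| ≤
      δ / (1 - δ) * (Real.sqrt (∑ i ∈ B, xdag i ^ 2) + Real.sqrt (∑ i ∈ A, d i ^ 2)) := by
  intro i hi
  subst hB
  have hcard : #A + #(Adag \ A) ≤ T + 1 := by
    have := card_le_card hA
    rw [card_sdiff_of_subset hA, hT]; omega
  set v := xdag - Function.extend Subtype.val xA 0
  set b : Fin p → ℝ := fun j => if j ∈ Adag \ A then xdag j else 0
  have hv : ∀ j ∉ Adag, v j = 0 := fun j hj => by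
    have hxdag : xdag j = 0 := by simpa [hAdag] using hj
    simp [v, extend_val_eq_zero xA fun h => hj (hA h), hxdag]
  have hb : ∀ j ∉ Adag \ A, b j = 0 := fun j hj => if_neg hj
  have ha : ∀ j ∉ A, (v - b) j = 0 := fun j hj => by
    by_cases hj' : j ∈ Adag
    · simp [v, b, hj, hj']
    · simp [hv j hj', hb j (fun h => hj' (mem_sdiff.1 h).1)]
  have hres : y - colSub Ψ A *ᵥ xA = Ψ *ᵥ v := by
    rw [mulVec_sub, hy, mulVec_extend_val]
  have hnormal : ∀ j ∈ A, (Ψᵀ *ᵥ (Ψ *ᵥ (v - b + b))) j = d j := fun j hj => by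
    rw [sub_add_cancel, ← hres, ← colSub_transpose_mulVec_apply Ψ _ ⟨j, hj⟩, hxA,
      transpose_mulVec_sub_mulVec_nonsing_inv_mulVec _
        (hRIP.isUnit_det_transpose_colSub_mul_colSub hδ1 ((Nat.le_add_right _ _).trans hcard))]
  have hcoef := hRIP.one_sub_mul_sqrt_sum_sq_le_of_transpose_mulVec_eq hδ0.le disjoint_sdiff
    hcard ha hb hnormal
  have hdi : |d i| ≤ δ * (√(∑ j, (v - b) j ^ 2) + √(∑ j, b j ^ 2)) := by
    rw [hdI i fun h => hi (hA h), hres]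
    refine (hRIP.abs_transpose_mulVec_mulVec_le (hT ▸ le_rfl) hv hi).trans ?_
    gcongr
    simpa using sqrt_sum_sq_add_le (v - b) b
  have hbsum : ∑ j, b j ^ 2 = ∑ j ∈ Adag \ A, xdag j ^ 2 := by
    simp only [b, ite_pow, zero_pow two_ne_zero, sum_ite_mem_eq]
  rw [hbsum] at hcoef hdi
  rw [div_mul_eq_mul_div, le_div_iff₀ (sub_pos.2 hδ1)]
  linarith [mul_le_mul_of_nonneg_left hcoef hδ0.le,
    mul_le_mul_of_nonneg_left hdi (sub_pos.2 hδ1).le]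

/-- bound on the dual variable outside the true support (noise-free setting). -/
theorem stmt_9 {n p : ℕ} (Ψ : Matrix (Fin n) (Fin p) ℝ)
    (xdag : Fin p → ℝ) (Adag : Finset (Fin p))
    (hAdag : Adag = Finset.univ.filter (fun i => xdag i ≠ 0))
    (T : ℕ) (hT : T = Adag.card)
    (y : Fin n → ℝ) (hy : y = Ψ *ᵥ xdag)
    (δ : ℝ) (hδ0 : 0 < δ) (hδ1 : δ < 1)
    (hRIP : HasRIP Ψ (T + 1) δ)
    (lam : ℝ) (hlam : 0 < lam)
    (A : Finset (Fin p)) (hA : A ⊆ Adag)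
    (B : Finset (Fin p)) (hB : B = Adag \ A)
    (d : Fin p → ℝ) (hdA : ∀ i ∈ A, |d i| = lam)
    (xA : {i // i ∈ A} → ℝ)
    (hxA : xA = ((colSub Ψ A)ᵀ * colSub Ψ A)⁻¹ *ᵥ ((colSub Ψ A)ᵀ *ᵥ y - fun j => d j.1))
    (hdI : ∀ i ∉ A, d i = (Ψᵀ *ᵥ (y - colSub Ψ A *ᵥ xA)) i)
 :
    ∀ i ∉ Adag, |d i| ≤
      δ / (1 - δ) * (Real.sqrt (∑ i ∈ B, xdag i ^ 2) + Real.sqrt (∑ i ∈ A, d i ^ 2)) :=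
  stmt_9_general Ψ xdag Adag hAdag T hT y hy δ hδ0 hδ1 hRIP A hA B hB d xA hxA hdI
end

section
/- In the noise-free setting under Assumption 1, let A ⊊ A† with B = A†∖A, let d ∈ ℝ^p have |d_i| = λ for all i ∈ A, let x_A = (Ψ_AᵗΨ_A)⁻¹(Ψ_Aᵗ y − d_A), define d_i = Ψ_iᵗ(y − Ψ_A x_A) for i ∉ A, and let i_A be an index maximizing |x†_i| over i ∈ A^c (so i_A ∈ B). Then |d_{i_A}| ≥ ¾|x†_{i_A}| − ¼λ. -/
/-!
Put `h = x† − x_A`, with `x_A` extended by zero, so that `Ψ h = y − Ψ_A x_A`; the normal equations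
defining `x_A` on `A`, and the definition of `d` off `A`, then say that `Ψᵀ Ψ h = d`. On vectors
supported in `T + 1` coordinates, RIP polarizes to `|⟨Ψu, Ψv⟩ − ⟨u, v⟩| ≤ δ‖u‖‖v‖`. Taking
`u = e_{i_A}`, `v = h` gives `|d_{i_A} − x†_{i_A}| ≤ δ‖h‖`; taking `u = h_A` and Cauchy–Schwarz
against `|d_i| = λ` gives `‖h_A‖ ≤ √T λ + δ‖h‖`; and `‖h_{A†∖A}‖ ≤ √T |x†_{i_A}|` by the choice
of `i_A`. Hence `(1 − δ)‖h‖ ≤ √T (λ + |x†_{i_A}|)`, and Assumption 1, i.e. `4δ√T ≤ 1 − δ`, turns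
this into `δ‖h‖ ≤ (λ + |x†_{i_A}|) / 4`.
-/

open Matrix

theorem dotProduct_self_eq_sum_sq {ι R : Type*} [Fintype ι] [Semiring R] (w : ι → R) :
    w ⬝ᵥ w = ∑ i, w i ^ 2 := by
  simp [dotProduct, sq]

theorem ite_mem_dotProduct {ι R : Type*} [Fintype ι] [DecidableEq ι] [Semiring R]
    (A : Finset ι) (f g : ι → R) :
    (fun i => if i ∈ A then f i else 0) ⬝ᵥ g = ∑ i ∈ A, f i * g i := by
  simp [dotProduct, ite_mul, Finset.sum_ite_mem]

namespace Matrix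

variable {ι : Type*} [Fintype ι]

theorem IsSymm.dotProduct_mulVec_comm {R : Type*} [CommSemiring R] {K : Matrix ι ι R}
    (hK : K.IsSymm) (u v : ι → R) :
    u ⬝ᵥ K *ᵥ v = v ⬝ᵥ K *ᵥ u := by
  rw [dotProduct_mulVec, dotProduct_comm, ← vecMul_transpose, hK.eq]

/-- Polarization: evaluate the diagonal bound at `t • u ± v` with `t = ‖v‖ / ‖u‖`. -/
theorem IsSymm.abs_dotProduct_mulVec_le {K : Matrix ι ι ℝ} (hK : K.IsSymm)
    {V : Submodule ℝ (ι → ℝ)} {δ : ℝ} (hV : ∀ w ∈ V, |w ⬝ᵥ K *ᵥ w| ≤ δ * (w ⬝ᵥ w))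
    {u v : ι → ℝ} (hu : u ∈ V) (hv : v ∈ V) :
    |u ⬝ᵥ K *ᵥ v| ≤ δ * √(u ⬝ᵥ u) * √(v ⬝ᵥ v) := by
  rcases eq_or_ne u 0 with rfl | hu0
  · simp
  rcases eq_or_ne v 0 with rfl | hv0
  · simp
  have hpolar : ∀ t : ℝ, |4 * t * (u ⬝ᵥ K *ᵥ v)|
      ≤ δ * (2 * t ^ 2 * (u ⬝ᵥ u) + 2 * (v ⬝ᵥ v)) := by
    intro t
    have hp := hV _ (V.add_mem (V.smul_mem t hu) hv)
    have hm := hV _ (V.sub_mem (V.smul_mem t hu) hv)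
    simp only [mulVec_add, mulVec_sub, mulVec_smul, add_dotProduct, dotProduct_add,
      sub_dotProduct, dotProduct_sub, smul_dotProduct, dotProduct_smul, smul_eq_mul,
      hK.dotProduct_mulVec_comm v u, dotProduct_comm v u] at hp hm
    rw [abs_le] at hp hm ⊢
    constructor <;> nlinarith
  have hsq : ∀ w : ι → ℝ, √(w ⬝ᵥ w) ^ 2 = w ⬝ᵥ w := fun w =>
    Real.sq_sqrt (Finset.sum_nonneg fun i _ => mul_self_nonneg (w i))
  have hpos : ∀ w : ι → ℝ, w ≠ 0 → 0 < √(w ⬝ᵥ w) := fun w hw =>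
    Real.sqrt_pos.2 (by simpa using dotProduct_self_star_pos_iff.2 hw)
  obtain ⟨a, ha, hua⟩ : ∃ a, 0 < a ∧ u ⬝ᵥ u = a ^ 2 := ⟨_, hpos u hu0, (hsq u).symm⟩
  obtain ⟨b, hb, hvb⟩ : ∃ b, 0 < b ∧ v ⬝ᵥ v = b ^ 2 := ⟨_, hpos v hv0, (hsq v).symm⟩
  rw [hua, hvb] at hpolar ⊢
  rw [Real.sqrt_sq ha.le, Real.sqrt_sq hb.le]
  have hbound := hpolar (b / a)
  rw [abs_mul, abs_of_pos (by positivity)] at hbound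
  field_simp at hbound
  nlinarith

end Matrix

theorem transpose_mulVec_sub_mulVec_gram_inv {m n R : Type*} [Fintype m] [Fintype n]
    [DecidableEq n] [CommRing R] (X : Matrix m n R) (hX : IsUnit (Xᵀ * X).det)
    (y : m → R) (g : n → R) :
    Xᵀ *ᵥ (y - X *ᵥ ((Xᵀ * X)⁻¹ *ᵥ (Xᵀ *ᵥ y - g))) = g := by
  rw [mulVec_sub, mulVec_mulVec, mulVec_mulVec, mul_nonsing_inv _ hX,
    one_mulVec, sub_sub_cancel]

theorem sqrt_sum_sq_le_sqrt_card_mul {ι : Type*} {s t : Finset ι} (hst : s ⊆ t) {f : ι → ℝ}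
    {M : ℝ} (hM : 0 ≤ M) (hf : ∀ i ∈ s, |f i| ≤ M) :
    √(∑ i ∈ s, f i ^ 2) ≤ √(t.card : ℝ) * M := by
  have hsum : ∑ i ∈ s, f i ^ 2 ≤ t.card * M ^ 2 := calc
    ∑ i ∈ s, f i ^ 2 ≤ s.card • M ^ 2 :=
      Finset.sum_le_card_nsmul _ _ _ fun i hi => by
        rw [← sq_abs]; exact pow_le_pow_left₀ (abs_nonneg _) (hf i hi) 2
    _ ≤ t.card * M ^ 2 := by
      rw [nsmul_eq_mul]; gcongr
  calc √(∑ i ∈ s, f i ^ 2) ≤ √(t.card * M ^ 2) := Real.sqrt_le_sqrt hsum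
    _ = √(t.card : ℝ) * M := by rw [Real.sqrt_mul (Nat.cast_nonneg _), Real.sqrt_sq hM]

theorem sqrt_add_le_add_sqrt {x y : ℝ} (hx : 0 ≤ x) (hy : 0 ≤ y) : √(x + y) ≤ √x + √y := by
  rw [Real.sqrt_le_left (by positivity)]
  nlinarith [Real.sq_sqrt hx, Real.sq_sqrt hy, Real.sqrt_nonneg x, Real.sqrt_nonneg y]

section ZeroExtension

variable {ι : Type*} [DecidableEq ι] {A : Finset ι}

def extendByZero (v : {i // i ∈ A} → ℝ) : ι → ℝ :=
  fun i => if h : i ∈ A then v ⟨i, h⟩ else 0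

theorem extendByZero_of_notMem (v : {i // i ∈ A} → ℝ) {i : ι} (hi : i ∉ A) :
    extendByZero v i = 0 :=
  dif_neg hi

@[simp]
theorem extendByZero_coe (v : {i // i ∈ A} → ℝ) (j : {i // i ∈ A}) : extendByZero v j = v j :=
  dif_pos j.2

theorem sum_mul_extendByZero [Fintype ι] (f : ι → ℝ) (v : {i // i ∈ A} → ℝ) :
    ∑ i, f i * extendByZero v i = ∑ j : {i // i ∈ A}, f j * v j := by
  rw [← Finset.sum_subset A.subset_univ fun i _ hi => by
    rw [extendByZero_of_notMem v hi, mul_zero], ← Finset.sum_coe_sort A]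
  simp only [extendByZero_coe]

theorem sum_extendByZero_sq [Fintype ι] (v : {i // i ∈ A} → ℝ) :
    ∑ i, extendByZero v i ^ 2 = ∑ j, v j ^ 2 := by
  simpa [sq] using sum_mul_extendByZero (extendByZero v) v

theorem colSub_mulVec {n p : ℕ} (Ψ : Matrix (Fin n) (Fin p) ℝ) {A : Finset (Fin p)}
    (v : {i // i ∈ A} → ℝ) : colSub Ψ A *ᵥ v = Ψ *ᵥ extendByZero v := by
  ext j
  simp [mulVec, dotProduct, sum_mul_extendByZero, colSub]

end ZeroExtension

namespace HasRIP

variable {n p k : ℕ} {Ψ : Matrix (Fin n) (Fin p) ℝ} {δ : ℝ}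

theorem abs_dotProduct_sub_le (hΨ : HasRIP Ψ k δ) {S : Finset (Fin p)} (hS : S.card ≤ k)
    {u v : Fin p → ℝ} (hu : ∀ i ∉ S, u i = 0) (hv : ∀ i ∉ S, v i = 0) :
    |u ⬝ᵥ Ψᵀ *ᵥ (Ψ *ᵥ v) - u ⬝ᵥ v| ≤ δ * √(u ⬝ᵥ u) * √(v ⬝ᵥ v) := by
  have hmem : ∀ {w : Fin p → ℝ}, (∀ i ∉ S, w i = 0) → w ∈ Submodule.pi (R := ℝ) (↑S)ᶜ fun _ => ⊥ :=
    fun hw => Submodule.mem_pi.2 fun i hi => by simpa using hw i hi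
  have hK : (Ψᵀ * Ψ - 1).IsSymm := by
    rw [IsSymm, transpose_sub, transpose_mul, transpose_transpose, transpose_one]
  have hform : ∀ u v : Fin p → ℝ,
      u ⬝ᵥ (Ψᵀ * Ψ - 1) *ᵥ v = u ⬝ᵥ Ψᵀ *ᵥ (Ψ *ᵥ v) - u ⬝ᵥ v := by
    intro u v
    rw [sub_mulVec, one_mulVec, ← mulVec_mulVec, dotProduct_sub]
  rw [← hform]
  refine hK.abs_dotProduct_mulVec_le (fun w hw => ?_) (hmem hu) (hmem hv)
  have hw : ∀ i ∉ S, w i = 0 := fun i hi => by simpa using Submodule.mem_pi.1 hw i hi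
  have hcard : (Finset.univ.filter fun i => w i ≠ 0).card ≤ k :=
    (Finset.card_le_card fun i hi => by
      by_contra hiS; exact (Finset.mem_filter.1 hi).2 (hw i hiS)).trans hS
  obtain ⟨hlo, hhi⟩ := hΨ w hcard
  have hΨw : w ⬝ᵥ Ψᵀ *ᵥ (Ψ *ᵥ w) = ∑ j, (Ψ *ᵥ w) j ^ 2 := by
    rw [dotProduct_mulVec, vecMul_transpose, dotProduct_self_eq_sum_sq]
  rw [hform, hΨw, dotProduct_self_eq_sum_sq, abs_le]
  constructor <;> linarith

theorem isUnit_det_gram (hΨ : HasRIP Ψ k δ) (hδ : δ < 1) {A : Finset (Fin p)}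
    (hA : A.card ≤ k) : IsUnit ((colSub Ψ A)ᵀ * colSub Ψ A).det := by
  rw [isUnit_iff_ne_zero]
  intro hdet
  obtain ⟨v, hv0, hv⟩ := exists_mulVec_eq_zero_iff.2 hdet
  have hΨv : ∑ j, (Ψ *ᵥ extendByZero v) j ^ 2 = 0 := by
    rw [← colSub_mulVec, ← dotProduct_self_eq_sum_sq]
    calc _ = v ⬝ᵥ ((colSub Ψ A)ᵀ * colSub Ψ A) *ᵥ v := by
          rw [← mulVec_mulVec, dotProduct_mulVec v, vecMul_transpose]
      _ = 0 := by rw [hv, dotProduct_zero]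
  have hcard : (Finset.univ.filter fun i => extendByZero v i ≠ 0).card ≤ k :=
    (Finset.card_le_card fun i hi => by
      by_contra hiA
      exact (Finset.mem_filter.1 hi).2 (extendByZero_of_notMem v hiA)).trans hA
  have hpos : 0 < ∑ i, extendByZero v i ^ 2 := by
    rw [sum_extendByZero_sq, ← dotProduct_self_eq_sum_sq]
    simpa using dotProduct_self_star_pos_iff.2 hv0
  nlinarith [(hΨ _ hcard).1]

variable {S : Finset (Fin p)} {h : Fin p → ℝ}

theorem abs_gram_mulVec_apply_sub_le (hΨ : HasRIP Ψ (S.card + 1) δ)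
    (hh : ∀ i ∉ S, h i = 0) (i : Fin p) :
    |(Ψᵀ *ᵥ (Ψ *ᵥ h)) i - h i| ≤ δ * √(h ⬝ᵥ h) := by
  have hsingle : ∀ j ∉ insert i S, (Pi.single i 1 : Fin p → ℝ) j = 0 := fun j hj => by
    rw [Pi.single_apply, if_neg (ne_of_mem_of_not_mem (Finset.mem_insert_self i S) hj).symm]
  simpa using hΨ.abs_dotProduct_sub_le (Finset.card_insert_le i S) hsingle
    fun j hj => hh j fun hjS => hj (Finset.mem_insert_of_mem hjS)

theorem sqrt_sum_sq_le (hΨ : HasRIP Ψ k δ) (hδ : 0 ≤ δ) (hS : S.card ≤ k)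
    (hh : ∀ i ∉ S, h i = 0) {A : Finset (Fin p)} (hA : A ⊆ S) :
    √(∑ i ∈ A, h i ^ 2) ≤ √(∑ i ∈ A, (Ψᵀ *ᵥ (Ψ *ᵥ h)) i ^ 2) + δ * √(h ⬝ᵥ h) := by
  have hAS : ∀ i ∉ S, (if i ∈ A then h i else 0) = 0 := fun i hi =>
    if_neg fun hiA => hi (hA hiA)
  have hrip := hΨ.abs_dotProduct_sub_le hS hAS hh
  simp only [ite_mem_dotProduct] at hrip
  set a := √(∑ i ∈ A, h i ^ 2)
  set c := √(∑ i ∈ A, (Ψᵀ *ᵥ (Ψ *ᵥ h)) i ^ 2)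
  set H := √(h ⬝ᵥ h)
  have ha : ∑ i ∈ A, h i * h i = a ^ 2 := by
    rw [Real.sq_sqrt (Finset.sum_nonneg fun i _ => sq_nonneg (h i))]
    simp only [sq]
  have hself : ∑ i ∈ A, h i * (if i ∈ A then h i else 0) = a ^ 2 := by
    rw [← ha]
    exact Finset.sum_congr rfl fun i hi => by rw [if_pos hi]
  rw [hself, ha, Real.sqrt_sq (Real.sqrt_nonneg _)] at hrip
  have hcs : ∑ i ∈ A, h i * (Ψᵀ *ᵥ (Ψ *ᵥ h)) i ≤ a * c := Real.sum_mul_le_sqrt_mul_sqrt _ _ _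
  have : 0 ≤ c + δ * H := by positivity
  nlinarith [abs_le.1 hrip, Real.sqrt_nonneg (∑ i ∈ A, h i ^ 2)]

theorem le_abs_gram_mulVec_apply (hΨ : HasRIP Ψ (S.card + 1) δ) (hδ0 : 0 ≤ δ) (hδ1 : δ < 1)
    (hδ : δ ≤ 1 / (4 * √(S.card : ℝ) + 1)) {lam : ℝ} (hlam : 0 ≤ lam)
    (hh : ∀ i ∉ S, h i = 0) {A : Finset (Fin p)} (hA : A ⊆ S)
    (hdA : ∀ i ∈ A, |(Ψᵀ *ᵥ (Ψ *ᵥ h)) i| = lam) {i₀ : Fin p}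
    (hmax : ∀ j ∉ A, |h j| ≤ |h i₀|) :
    3 / 4 * |h i₀| - 1 / 4 * lam ≤ |(Ψᵀ *ᵥ (Ψ *ᵥ h)) i₀| := by
  have hpoint := hΨ.abs_gram_mulVec_apply_sub_le hh i₀
  set s := √(S.card : ℝ)
  set H := √(h ⬝ᵥ h)
  have honA : √(∑ i ∈ A, h i ^ 2) ≤ s * lam + δ * H :=
    (hΨ.sqrt_sum_sq_le hδ0 S.card.le_succ hh hA).trans <| add_le_add_left
      (sqrt_sum_sq_le_sqrt_card_mul hA hlam fun i hi => (hdA i hi).le) _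
  have hoffA : √(∑ i ∈ S \ A, h i ^ 2) ≤ s * |h i₀| :=
    sqrt_sum_sq_le_sqrt_card_mul Finset.sdiff_subset (abs_nonneg _) fun j hj =>
      hmax j (Finset.mem_sdiff.1 hj).2
  have hsplit : H ≤ √(∑ i ∈ A, h i ^ 2) + √(∑ i ∈ S \ A, h i ^ 2) := by
    have hsum : h ⬝ᵥ h = ∑ i ∈ A, h i ^ 2 + ∑ i ∈ S \ A, h i ^ 2 := by
      rw [dotProduct_self_eq_sum_sq, add_comm, Finset.sum_sdiff hA,
        ← Finset.sum_subset (Finset.subset_univ S) fun i _ hi => by rw [hh i hi, sq, mul_zero]]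
    rw [show H = _ from congrArg Real.sqrt hsum]
    exact sqrt_add_le_add_sqrt (Finset.sum_nonneg fun _ _ => sq_nonneg _)
      (Finset.sum_nonneg fun _ _ => sq_nonneg _)
  have hδs : 4 * δ * s ≤ 1 - δ := by
    rw [le_div_iff₀ (by positivity)] at hδ
    linarith
  -- `(1 - δ) H ≤ s (λ + |h i₀|)`, and Assumption 1 turns this into `δ H ≤ (λ + |h i₀|) / 4`.
  have hδH : δ * H ≤ (lam + |h i₀|) / 4 := by
    nlinarith [Real.sqrt_nonneg (h ⬝ᵥ h), abs_nonneg (h i₀)]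
  have := abs_sub_abs_le_abs_sub (h i₀) ((Ψᵀ *ᵥ (Ψ *ᵥ h)) i₀)
  rw [abs_sub_comm] at this
  linarith

end HasRIP

theorem stmt_12_general {n p : ℕ} (Ψ : Matrix (Fin n) (Fin p) ℝ)
    (xdag : Fin p → ℝ) (Adag : Finset (Fin p))
    (hAdag : Adag = Finset.univ.filter (fun i => xdag i ≠ 0))
    (T : ℕ) (hT : T = Adag.card)
    (y : Fin n → ℝ) (hy : y = Ψ *ᵥ xdag)
    (δ : ℝ) (hδ0 : 0 < δ) (hδ1 : δ < 1)
    (hRIP : HasRIP Ψ (T + 1) δ)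
    (hAss1 : δ ≤ 1 / (4 * Real.sqrt T + 1))
    (lam : ℝ) (hlam : 0 < lam)
    (A : Finset (Fin p)) (hA : A ⊂ Adag)
    (d : Fin p → ℝ) (hdA : ∀ i ∈ A, |d i| = lam)
    (xA : {i // i ∈ A} → ℝ)
    (hxA : xA = ((colSub Ψ A)ᵀ * colSub Ψ A)⁻¹ *ᵥ ((colSub Ψ A)ᵀ *ᵥ y - fun j => d j.1))
    (hdI : ∀ i ∉ A, d i = (Ψᵀ *ᵥ (y - colSub Ψ A *ᵥ xA)) i)
    (iA : Fin p) (hiA : iA ∉ A) (hmax : ∀ j ∉ A, |xdag j| ≤ |xdag iA|) :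
    3 / 4 * |xdag iA| - 1 / 4 * lam ≤ |d iA| := by
  subst hT
  set h := xdag - extendByZero xA
  have hoff : ∀ i ∉ A, h i = xdag i := fun i hi => by
    simp [h, extendByZero_of_notMem xA hi]
  have hsupp : ∀ i ∉ Adag, h i = 0 := fun i hi => by
    rw [hoff i fun hiA => hi (hA.subset hiA)]
    simpa [hAdag] using hi
  have hres : Ψ *ᵥ h = y - colSub Ψ A *ᵥ xA := by
    rw [mulVec_sub, colSub_mulVec, hy]
  -- the normal equations defining `x_A` say that `Ψᵀ Ψ h = d` on `A` too
  have hd : Ψᵀ *ᵥ (Ψ *ᵥ h) = d := by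
    have hgram := hRIP.isUnit_det_gram hδ1
      ((Finset.card_le_card hA.subset).trans Adag.card.le_succ)
    have hnormal := transpose_mulVec_sub_mulVec_gram_inv (colSub Ψ A) hgram y fun j => d j
    rw [← hxA] at hnormal
    ext i
    by_cases hi : i ∈ A
    · rw [hres]
      exact congrFun hnormal ⟨i, hi⟩
    · rw [hres, hdI i hi]
  have hmax' : ∀ j ∉ A, |h j| ≤ |h iA| := fun j hj => by
    simpa only [hoff j hj, hoff iA hiA] using hmax j hj
  have key := hRIP.le_abs_gram_mulVec_apply hδ0.le hδ1 hAss1 hlam.le hsupp hA.subset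
    (fun i hi => hd ▸ hdA i hi) hmax'
  rwa [hd, hoff iA hiA] at key

/-- under Assumption 1, `|d_{i_A}| ≥ ¾|x†_{i_A}| − ¼λ`. -/
theorem stmt_12 {n p : ℕ} (Ψ : Matrix (Fin n) (Fin p) ℝ)
    (xdag : Fin p → ℝ) (Adag : Finset (Fin p))
    (hAdag : Adag = Finset.univ.filter (fun i => xdag i ≠ 0))
    (T : ℕ) (hT : T = Adag.card)
    (y : Fin n → ℝ) (hy : y = Ψ *ᵥ xdag)
    (δ : ℝ) (hδ0 : 0 < δ) (hδ1 : δ < 1)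
    (hRIP : HasRIP Ψ (T + 1) δ)
    (hAss1 : δ ≤ 1 / (4 * Real.sqrt T + 1))
    (lam : ℝ) (hlam : 0 < lam)
    (A : Finset (Fin p)) (hA : A ⊂ Adag)
    (B : Finset (Fin p)) (hB : B = Adag \ A)
    (d : Fin p → ℝ) (hdA : ∀ i ∈ A, |d i| = lam)
    (xA : {i // i ∈ A} → ℝ)
    (hxA : xA = ((colSub Ψ A)ᵀ * colSub Ψ A)⁻¹ *ᵥ ((colSub Ψ A)ᵀ *ᵥ y - fun j => d j.1))
    (hdI : ∀ i ∉ A, d i = (Ψᵀ *ᵥ (y - colSub Ψ A *ᵥ xA)) i)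
    (iA : Fin p) (hiA : iA ∉ A) (hmax : ∀ j ∉ A, |xdag j| ≤ |xdag iA|) :
    3 / 4 * |xdag iA| - 1 / 4 * lam ≤ |d iA| :=
  stmt_12_general Ψ xdag Adag hAdag T hT y hy δ hδ0 hδ1 hRIP hAss1 lam hlam A hA d hdA xA hxA hdI iA
    hiA hmax
end

section
/- (Base case of the continuation.) In the noise-free setting under Assumption 1, assume additionally that the columns of Ψ are normalized, i.e., ‖Ψ_i‖₂ = 1 for every i. Then for any index i maximizing |x†_j| over j ∈ {1,…,p}, one has |Ψ_iᵗ y| ≥ ¾|x†_i|, hence ‖Ψᵗy‖_∞ ≥ ¾‖x†‖_∞. Consequently, if λ₀ > ‖Ψᵗy‖_∞ and λ₁ = (2/3)λ₀, then J_{λ₁,3} = ∅. -/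
open Matrix

/-!
Write `x = x_i e_i + v` with `v` the restriction of `x` to the other indices. With a normalized
column, `(ΨᵀΨx)_i = x_i + ⟪Ψe_i, Ψv⟫`, and since `e_i` and `v` have disjoint supports inside
`A† ∪ {i}` (at most `T + 1` indices), polarization and the RIP bound the cross term by
`δ ‖v‖₂ ≤ δ √T |x_i|` when `i` maximizes `|x_j|`. Assumption 1 gives `δ √T ≤ 1/4`, hence
`|(ΨᵀΨx)_i| ≥ ¾ |x_i|`; the sup-norm bound and the emptiness of `J_{λ₁,3}` follow at once.
-/

open Finset

lemma card_filter_ne_zero_le_s17 {ι : Type*} [Fintype ι] {x : ι → ℝ} {S : Finset ι}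
    (hx : ∀ j ∉ S, x j = 0) : (univ.filter fun j => x j ≠ 0).card ≤ S.card :=
  card_le_card fun j hj => by_contra fun hjS => (mem_filter.mp hj).2 (hx j hjS)

lemma sum_sq_le_card_mul_sq {ι : Type*} [Fintype ι] {x : ι → ℝ} {S : Finset ι} {M : ℝ}
    (hx : ∀ j ∉ S, x j = 0) (hM : ∀ j, |x j| ≤ M) : ∑ j, x j ^ 2 ≤ S.card * M ^ 2 := by
  calc ∑ j, x j ^ 2 = ∑ j ∈ S, x j ^ 2 :=
        (sum_subset (subset_univ S) fun j _ hj => by rw [hx j hj, sq, mul_zero]).symm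
    _ ≤ ∑ _j ∈ S, M ^ 2 := sum_le_sum fun j _ =>
        sq_le_sq' (abs_le.mp (hM j)).1 (abs_le.mp (hM j)).2
    _ = S.card * M ^ 2 := by rw [sum_const, nsmul_eq_mul]

lemma eq_zero_of_sum_sq_nonpos_s17 {ι : Type*} [Fintype ι] {x : ι → ℝ} (h : ∑ j, x j ^ 2 ≤ 0) :
    x = 0 :=
  funext fun j => pow_eq_zero_iff two_ne_zero |>.mp <|
    (sum_eq_zero_iff_of_nonneg fun _ _ => sq_nonneg (x _)).mp
      (h.antisymm (sum_nonneg fun _ _ => sq_nonneg _)) j (mem_univ j)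

lemma mul_norm_le_norm_of_forall_max {ι : Type*} [Fintype ι] {x z : ι → ℝ} {c : ℝ} (hc : 0 < c)
    (h : ∀ i, (∀ j, |x j| ≤ |x i|) → c * |x i| ≤ |z i|) : c * ‖x‖ ≤ ‖z‖ := by
  rw [← le_div_iff₀' hc, pi_norm_le_iff_of_nonneg (div_nonneg (norm_nonneg z) hc.le)]
  intro j
  have : Nonempty ι := ⟨j⟩
  obtain ⟨i, hi⟩ := Finite.exists_max fun j => |x j|
  rw [Real.norm_eq_abs, le_div_iff₀' hc]
  calc c * |x j| ≤ c * |x i| := mul_le_mul_of_nonneg_left (hi j) hc.le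
    _ ≤ |z i| := h i hi
    _ ≤ ‖z‖ := norm_le_pi_norm z i

lemma dotProduct_mulVec_eq_polarization {n p : ℕ} (Ψ : Matrix (Fin n) (Fin p) ℝ)
    (u v : Fin p → ℝ) :
    (Ψ *ᵥ u) ⬝ᵥ (Ψ *ᵥ v) = (∑ j, (Ψ *ᵥ (u + v)) j ^ 2 - ∑ j, (Ψ *ᵥ (u - v)) j ^ 2) / 4 := by
  simp only [dotProduct, mulVec_add, mulVec_sub, Pi.add_apply, Pi.sub_apply, ← sum_sub_distrib,
    sum_div]
  exact sum_congr rfl fun j _ => by ring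

lemma sum_sq_add_eq_of_mul_eq_zero {ι : Type*} [Fintype ι] {u v : ι → ℝ}
    (huv : ∀ j, u j * v j = 0) : ∑ j, (u + v) j ^ 2 = ∑ j, u j ^ 2 + ∑ j, v j ^ 2 := by
  rw [← sum_add_distrib]
  exact sum_congr rfl fun j _ => by simp only [Pi.add_apply]; linear_combination 2 * huv j

lemma sum_sq_sub_eq_of_mul_eq_zero {ι : Type*} [Fintype ι] {u v : ι → ℝ}
    (huv : ∀ j, u j * v j = 0) : ∑ j, (u - v) j ^ 2 = ∑ j, u j ^ 2 + ∑ j, v j ^ 2 := by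
  rw [← sum_add_distrib]
  exact sum_congr rfl fun j _ => by simp only [Pi.sub_apply]; linear_combination -2 * huv j

namespace HasRIP

variable {n p k : ℕ} {Ψ : Matrix (Fin n) (Fin p) ℝ} {δ : ℝ} {S : Finset (Fin p)}
  {u v : Fin p → ℝ}

lemma of_support_subset (h : HasRIP Ψ k δ) (hS : S.card ≤ k) {x : Fin p → ℝ}
    (hx : ∀ j ∉ S, x j = 0) :
    (1 - δ) * (∑ i, x i ^ 2) ≤ ∑ j, (Ψ *ᵥ x) j ^ 2 ∧
      ∑ j, (Ψ *ᵥ x) j ^ 2 ≤ (1 + δ) * (∑ i, x i ^ 2) :=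
  h x ((card_filter_ne_zero_le_s17 hx).trans hS)

lemma abs_dotProduct_le_half_sum (h : HasRIP Ψ k δ) (hS : S.card ≤ k)
    (hu : ∀ j ∉ S, u j = 0) (hv : ∀ j ∉ S, v j = 0) (huv : ∀ j, u j * v j = 0) :
    |(Ψ *ᵥ u) ⬝ᵥ (Ψ *ᵥ v)| ≤ δ / 2 * (∑ j, u j ^ 2 + ∑ j, v j ^ 2) := by
  have hadd := h.of_support_subset hS (x := u + v) fun j hj => by simp [hu j hj, hv j hj]
  have hsub := h.of_support_subset hS (x := u - v) fun j hj => by simp [hu j hj, hv j hj]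
  rw [sum_sq_add_eq_of_mul_eq_zero huv] at hadd
  rw [sum_sq_sub_eq_of_mul_eq_zero huv] at hsub
  rw [dotProduct_mulVec_eq_polarization, abs_le]
  constructor <;> linarith [hadd.1, hadd.2, hsub.1, hsub.2]

lemma abs_dotProduct_le (h : HasRIP Ψ k δ) (hS : S.card ≤ k)
    (hu : ∀ j ∉ S, u j = 0) (hv : ∀ j ∉ S, v j = 0) (huv : ∀ j, u j * v j = 0) :
    |(Ψ *ᵥ u) ⬝ᵥ (Ψ *ᵥ v)| ≤ δ * √(∑ j, u j ^ 2) * √(∑ j, v j ^ 2) := by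
  set a := √(∑ j, u j ^ 2)
  set b := √(∑ j, v j ^ 2)
  obtain ha0 | ha0 : a = 0 ∨ 0 < a := (Real.sqrt_nonneg _).eq_or_lt'
  · simp [eq_zero_of_sum_sq_nonpos_s17 (Real.sqrt_eq_zero'.mp ha0), ha0]
  obtain hb0 | hb0 : b = 0 ∨ 0 < b := (Real.sqrt_nonneg _).eq_or_lt'
  · simp [eq_zero_of_sum_sq_nonpos_s17 (Real.sqrt_eq_zero'.mp hb0), hb0]
  have ha : ∑ j, u j ^ 2 = a ^ 2 := (Real.sq_sqrt (sum_nonneg fun j _ => sq_nonneg _)).symm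
  have hb : ∑ j, v j ^ 2 = b ^ 2 := (Real.sq_sqrt (sum_nonneg fun j _ => sq_nonneg _)).symm
  -- `b • u` and `a • v` both have norm `a * b`, so the half-sum bound is `δ * (a * b) ^ 2`
  have key := h.abs_dotProduct_le_half_sum hS (u := b • u) (v := a • v)
    (fun j hj => by simp [hu j hj]) (fun j hj => by simp [hv j hj])
    (fun j => by simp only [Pi.smul_apply, smul_eq_mul]; linear_combination (a * b) * huv j)
  simp only [mulVec_smul, smul_dotProduct, dotProduct_smul, Pi.smul_apply, smul_eq_mul, mul_pow,
    ← mul_sum, ha, hb, abs_mul, abs_of_pos ha0, abs_of_pos hb0] at key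
  refine le_of_mul_le_mul_left ?_ (mul_pos ha0 hb0)
  linear_combination key

lemma abs_transpose_mulVec_mulVec_apply_sub_le (h : HasRIP Ψ k δ) {A : Finset (Fin p)} {i : Fin p}
    (hA : (insert i A).card ≤ k) (hcol : ∑ j, Ψ j i ^ 2 = 1) {x : Fin p → ℝ}
    (hx : ∀ j ∉ A, x j = 0) :
    |(Ψᵀ *ᵥ (Ψ *ᵥ x)) i - x i| ≤ δ * √(∑ j, Function.update x i 0 j ^ 2) := by
  set e : Fin p → ℝ := Pi.single i 1
  set v := Function.update x i 0
  have hgram : ∀ w, (Ψᵀ *ᵥ w) i = (Ψ *ᵥ e) ⬝ᵥ w := fun w => by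
    rw [mulVec_single_one]; simp [mulVec, dotProduct]
  have hee : (Ψ *ᵥ e) ⬝ᵥ (Ψ *ᵥ e) = 1 := by simp [e, dotProduct, ← sq, hcol]
  have hx_eq : x = x i • e + v := funext fun j => by
    by_cases hji : j = i <;> simp [e, v, hji]
  have hsplit : (Ψᵀ *ᵥ (Ψ *ᵥ x)) i = x i + (Ψ *ᵥ e) ⬝ᵥ (Ψ *ᵥ v) := by
    conv_lhs => rw [hgram, hx_eq, mulVec_add, mulVec_smul, dotProduct_add, dotProduct_smul, hee]
    rw [smul_eq_mul, mul_one]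
  have hcross := h.abs_dotProduct_le hA (u := e) (v := v)
    (fun j hj => Pi.single_eq_of_ne (mem_insert.not.mp hj |> not_or.mp).1 _)
    (fun j hj => by
      obtain ⟨hji, hjA⟩ := not_or.mp (mem_insert.not.mp hj)
      simp [v, hji, hx j hjA])
    (fun j => by by_cases hji : j = i <;> simp [e, v, hji])
  have he : ∑ j, e j ^ 2 = 1 := by simp [e, Pi.single_apply]
  rwa [he, Real.sqrt_one, mul_one, ← add_sub_cancel_left (x i) ((Ψ *ᵥ e) ⬝ᵥ (Ψ *ᵥ v)),
    ← hsplit] at hcross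

end HasRIP

lemma three_quarters_abs_le_transpose_mulVec_mulVec_apply {n p : ℕ}
    {Ψ : Matrix (Fin n) (Fin p) ℝ} {A : Finset (Fin p)} {δ : ℝ}
    (hRIP : HasRIP Ψ (A.card + 1) δ) (hδ : 0 ≤ δ) (hδA : δ * √A.card ≤ 1 / 4)
    {x : Fin p → ℝ} (hx : ∀ j ∉ A, x j = 0) {i : Fin p} (hcol : ∑ k, Ψ k i ^ 2 = 1)
    (hmax : ∀ j, |x j| ≤ |x i|) :
    3 / 4 * |x i| ≤ |(Ψᵀ *ᵥ (Ψ *ᵥ x)) i| := by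
  have hcross := HasRIP.abs_transpose_mulVec_mulVec_apply_sub_le hRIP (card_insert_le i A) hcol hx
  have hoff : ∑ j, Function.update x i 0 j ^ 2 ≤ A.card * |x i| ^ 2 :=
    sum_sq_le_card_mul_sq (fun j hj => by by_cases hji : j = i <;> simp [hji, hx j hj])
      fun j => by by_cases hji : j = i <;> simp [hji, hmax j]
  have hsqrt : √(∑ j, Function.update x i 0 j ^ 2) ≤ √A.card * |x i| := by
    rw [← Real.sqrt_sq (abs_nonneg (x i)), ← Real.sqrt_mul (Nat.cast_nonneg _)]
    exact Real.sqrt_le_sqrt hoff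
  calc 3 / 4 * |x i| ≤ |x i| - δ * √A.card * |x i| := by nlinarith [abs_nonneg (x i)]
    _ ≤ |x i| - δ * √(∑ j, Function.update x i 0 j ^ 2) := by
        rw [mul_assoc]; gcongr
    _ ≤ |(Ψᵀ *ᵥ (Ψ *ᵥ x)) i| := by
        linarith [(abs_sub_abs_le_abs_sub (x i) ((Ψᵀ *ᵥ (Ψ *ᵥ x)) i)).trans_eq (abs_sub_comm _ _)]

theorem stmt_17_general {n p : ℕ} (Ψ : Matrix (Fin n) (Fin p) ℝ)
    (xdag : Fin p → ℝ) (Adag : Finset (Fin p))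
    (hAdag : Adag = Finset.univ.filter (fun i => xdag i ≠ 0))
    (T : ℕ) (hT : T = Adag.card)
    (y : Fin n → ℝ) (hy : y = Ψ *ᵥ xdag)
    (δ : ℝ) (hδ0 : 0 < δ)
    (hRIP : HasRIP Ψ (T + 1) δ)
    (hAss1 : δ ≤ 1 / (4 * Real.sqrt T + 1))
    (hnorm : ∀ i : Fin p, ∑ k, Ψ k i ^ 2 = 1) :
    (∀ i : Fin p, (∀ j, |xdag j| ≤ |xdag i|) → 3 / 4 * |xdag i| ≤ |(Ψᵀ *ᵥ y) i|) ∧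
      3 / 4 * ‖xdag‖ ≤ ‖Ψᵀ *ᵥ y‖ ∧
      ∀ lam0 lam1 : ℝ, ‖Ψᵀ *ᵥ y‖ < lam0 → lam1 = 2 / 3 * lam0 →
        Finset.univ.filter (fun i => 3 * lam1 ≤ |xdag i|) = ∅ := by
  subst hy hT
  have hδT : δ * √Adag.card ≤ 1 / 4 := by
    have := (le_div_iff₀ (by positivity)).mp hAss1
    nlinarith
  have hsupp : ∀ j ∉ Adag, xdag j = 0 := fun j hj => by simpa [hAdag] using hj
  have hentry : ∀ i, (∀ j, |xdag j| ≤ |xdag i|) → 3 / 4 * |xdag i| ≤ |(Ψᵀ *ᵥ (Ψ *ᵥ xdag)) i| :=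
    fun i => three_quarters_abs_le_transpose_mulVec_mulVec_apply hRIP hδ0.le hδT hsupp (hnorm i)
  have hsup := mul_norm_le_norm_of_forall_max (by norm_num) hentry
  refine ⟨hentry, hsup, fun lam0 lam1 hlam0 hlam1 => filter_eq_empty_iff.mpr fun j _ hj => ?_⟩
  have hxj : |xdag j| ≤ ‖xdag‖ := norm_le_pi_norm xdag j
  linarith [norm_nonneg (Ψᵀ *ᵥ (Ψ *ᵥ xdag))]

/-- base case of the continuation: with normalized columns, any index `i`
maximizing `|x†_j|` satisfies `|Ψ_iᵗ y| ≥ ¾|x†_i|`, hence `‖Ψᵗy‖_∞ ≥ ¾‖x†‖_∞`; consequently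
if `λ₀ > ‖Ψᵗy‖_∞` and `λ₁ = (2/3)λ₀` then `J_{λ₁,3} = ∅`.
(The norm on `Fin p → ℝ` and `Fin n → ℝ` is the sup-norm.) -/
theorem stmt_17 {n p : ℕ} (Ψ : Matrix (Fin n) (Fin p) ℝ)
    (xdag : Fin p → ℝ) (Adag : Finset (Fin p))
    (hAdag : Adag = Finset.univ.filter (fun i => xdag i ≠ 0))
    (T : ℕ) (hT : T = Adag.card)
    (y : Fin n → ℝ) (hy : y = Ψ *ᵥ xdag)
    (δ : ℝ) (hδ0 : 0 < δ) (hδ1 : δ < 1)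
    (hRIP : HasRIP Ψ (T + 1) δ)
    (hAss1 : δ ≤ 1 / (4 * Real.sqrt T + 1))
    (hnorm : ∀ i : Fin p, ∑ k, Ψ k i ^ 2 = 1) :
    (∀ i : Fin p, (∀ j, |xdag j| ≤ |xdag i|) → 3 / 4 * |xdag i| ≤ |(Ψᵀ *ᵥ y) i|) ∧
      3 / 4 * ‖xdag‖ ≤ ‖Ψᵀ *ᵥ y‖ ∧
      ∀ lam0 lam1 : ℝ, ‖Ψᵀ *ᵥ y‖ < lam0 → lam1 = 2 / 3 * lam0 →
        Finset.univ.filter (fun i => 3 * lam1 ≤ |xdag i|) = ∅ :=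
  stmt_17_general Ψ xdag Adag hAdag T hT y hy δ hδ0 hRIP hAss1 hnorm
end
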